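/- arXiv:1412.8045 — 4 statements merged into one kernel-verified Lean document; each statement's English description precedes it below -/
import Mathlib

section
/- Let n, q be positive integers, let W ∈ ℝ^{n×n} be symmetric positive definite, let S ∈ ℝ^{n×q} have linearly independent columns (so SᵀWS is invertible), and let R ∈ ℝ^{n×n} be symmetric. Define P := S(SᵀWS)⁻¹Sᵀ and E := W·P·R·(I − P·W) + R·P·W. Then E is symmetric and satisfies the action constraint E·S = R·S. -/
/-!
`P W` is the oblique projection onto the columns of `S`, so `P W S = S`, and hence
`E S = W P R S - W P R S + R S = R S`. Since `W`, `P` and `R` are symmetric, transposing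
`E = W P R - W P R P W + R P W` swaps the outer terms and fixes the middle one.
-/

open Matrix

/-- The projection-type matrix `P(S,W) := S (Sᵀ W S)⁻¹ Sᵀ`. -/
noncomputable def projMat {n q : ℕ} (S : Matrix (Fin n) (Fin q) ℝ)
    (W : Matrix (Fin n) (Fin n) ℝ) : Matrix (Fin n) (Fin n) ℝ :=
  S * (Sᵀ * W * S)⁻¹ * Sᵀ

namespace Matrix

variable {m n α : Type*} [Fintype n] [DecidableEq n] [CommRing α]

def symmUpdate (W P R : Matrix n n α) : Matrix n n α :=
  W * P * R * (1 - P * W) + R * P * W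

theorem symmUpdate_isSymm {W P R : Matrix n n α} (hW : W.IsSymm) (hP : P.IsSymm)
    (hR : R.IsSymm) : (symmUpdate W P R).IsSymm := by
  unfold symmUpdate IsSymm
  simp only [transpose_add, transpose_mul, transpose_sub, transpose_one, hW.eq, hP.eq, hR.eq]
  noncomm_ring

theorem symmUpdate_mul_of_mul_mul_eq {W P R : Matrix n n α} {S : Matrix n m α}
    (hPWS : P * W * S = S) : symmUpdate W P R * S = R * S := by
  have expand : symmUpdate W P R * S =
      W * P * R * S - W * P * R * (P * W * S) + R * (P * W * S) := by
    simp only [symmUpdate, Matrix.sub_mul, Matrix.add_mul, Matrix.mul_sub, Matrix.mul_one,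
      Matrix.mul_assoc]
  rw [expand, hPWS, sub_self, zero_add]

end Matrix

section projMat

variable {n q : ℕ}

theorem isUnit_det_transpose_mul_mul {W : Matrix (Fin n) (Fin n) ℝ} (hW : W.PosDef)
    {S : Matrix (Fin n) (Fin q) ℝ} (hS : LinearIndependent ℝ (fun j : Fin q => Sᵀ j)) :
    IsUnit (Sᵀ * W * S).det := by
  have hpos : (Sᴴ * W * S).PosDef :=
    hW.conjTranspose_mul_mul_same (mulVec_injective_iff.mpr hS)
  rw [conjTranspose_eq_transpose_of_trivial] at hpos
  exact (isUnit_iff_isUnit_det _).mp hpos.isUnit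

theorem projMat_mul_mul_self {S : Matrix (Fin n) (Fin q) ℝ} {W : Matrix (Fin n) (Fin n) ℝ}
    (h : IsUnit (Sᵀ * W * S).det) : projMat S W * W * S = S := by
  rw [projMat, Matrix.mul_assoc, Matrix.mul_assoc, Matrix.mul_assoc, ← Matrix.mul_assoc Sᵀ,
    nonsing_inv_mul _ h, Matrix.mul_one]

theorem projMat_isSymm (S : Matrix (Fin n) (Fin q) ℝ) {W : Matrix (Fin n) (Fin n) ℝ}
    (hW : W.IsSymm) : (projMat S W).IsSymm := by
  simp only [projMat, IsSymm, transpose_mul, transpose_nonsing_inv, transpose_transpose, hW.eq,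
    Matrix.mul_assoc]

end projMat

theorem stmt0_general {n q : ℕ}
    (W : Matrix (Fin n) (Fin n) ℝ) (hW : W.PosDef)
    (S : Matrix (Fin n) (Fin q) ℝ)
    (hS : LinearIndependent ℝ (fun j : Fin q => Sᵀ j))
    (R : Matrix (Fin n) (Fin n) ℝ) (hR : R.IsSymm) :
    ((W * projMat S W * R * (1 - projMat S W * W) + R * projMat S W * W).IsSymm) ∧
    (W * projMat S W * R * (1 - projMat S W * W) + R * projMat S W * W) * S = R * S := by
  have hWsymm : W.IsSymm := hW.isHermitian.eq
  exact ⟨symmUpdate_isSymm hWsymm (projMat_isSymm S hWsymm) hR,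
    symmUpdate_mul_of_mul_mul_eq (projMat_mul_mul_self (isUnit_det_transpose_mul_mul hW hS))⟩

theorem stmt0 {n q : ℕ} (hn : 0 < n) (hq : 0 < q)
    (W : Matrix (Fin n) (Fin n) ℝ) (hW : W.PosDef)
    (S : Matrix (Fin n) (Fin q) ℝ)
    (hS : LinearIndependent ℝ (fun j : Fin q => Sᵀ j))
    (R : Matrix (Fin n) (Fin n) ℝ) (hR : R.IsSymm) :
    ((W * projMat S W * R * (1 - projMat S W * W) + R * projMat S W * W).IsSymm) ∧
    (W * projMat S W * R * (1 - projMat S W * W) + R * projMat S W * W) * S = R * S :=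
  stmt0_general W hW S hS R hR
end

section
/- Let ρ be a positive integer, let Q ∈ ℝ^{n×n} and G₀ ∈ ℝ^{n×n} be symmetric, and for i = 0,…,ρ let Wᵢ ∈ ℝ^{n×n} be symmetric positive definite and Sᵢ ∈ ℝ^{n×q_i} have linearly independent columns. Assume the weighting matrices satisfy the action constraint Wᵢ·Sᵢ = Q·Sᵢ for all 0 ≤ i ≤ ρ, and that Sₖᵀ·Q·Sᵢ = 0 whenever 0 ≤ i < k ≤ ρ. Define iteratively G_{k+1} := Q + (I − Wₖ·P(Sₖ,Wₖ))·(Gₖ − Q)·(I − P(Sₖ,Wₖ)·Wₖ), where P(Sₖ,Wₖ) := Sₖ(SₖᵀWₖSₖ)⁻¹Sₖᵀ. Then the estimate G_{k+1} satisfies the quadratic hereditary property: G_{k+1}·Sᵢ = Q·Sᵢ for all 0 ≤ i ≤ k ≤ ρ. -/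
open Matrix

/-!
Write `Pₖ = P(Sₖ, Wₖ)`. The right factor `1 - Pₖ Wₖ` of the update annihilates `Sₖ`, so
`G_{k+1} Sₖ = Q Sₖ`; and it fixes every `Sᵢ` with `Sₖᵀ Wₖ Sᵢ = 0`. By the action constraint and
symmetry, `Sₖᵀ Wₖ = (Wₖ Sₖ)ᵀ = (Q Sₖ)ᵀ = Sₖᵀ Q`, so this holds for `i < k` by `Q`-orthogonality,
and then `G_{k+1} Sᵢ - Q Sᵢ` is a multiple of `(Gₖ - Q) Sᵢ = 0`.
-/

lemma isUnit_transpose_mul_mul_self {n q : ℕ} {S : Matrix (Fin n) (Fin q) ℝ}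
    {W : Matrix (Fin n) (Fin n) ℝ} (hW : W.PosDef)
    (hS : LinearIndependent ℝ (fun j : Fin q => Sᵀ j)) :
    IsUnit (Sᵀ * W * S) :=
  (hW.conjTranspose_mul_mul_same (mulVec_injective_iff.mpr hS)).isUnit

lemma transpose_mul_mul_eq_of_mul_eq {n q p : ℕ} {S : Matrix (Fin n) (Fin q) ℝ}
    {W Q : Matrix (Fin n) (Fin n) ℝ} (hW : W.IsSymm) (hQ : Q.IsSymm) (h : W * S = Q * S)
    (T : Matrix (Fin n) (Fin p) ℝ) :
    Sᵀ * W * T = Sᵀ * Q * T := by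
  rw [← hW.eq, ← hQ.eq, ← transpose_mul, ← transpose_mul, h]

lemma one_sub_projMat_mul_mul_self {n q : ℕ} {S : Matrix (Fin n) (Fin q) ℝ}
    {W : Matrix (Fin n) (Fin n) ℝ} (hM : IsUnit (Sᵀ * W * S)) :
    (1 - projMat S W * W) * S = 0 := by
  have hinv : (Sᵀ * W * S)⁻¹ * (Sᵀ * W * S) = 1 :=
    nonsing_inv_mul _ ((isUnit_iff_isUnit_det _).mp hM)
  calc (1 - projMat S W * W) * S
      = S - S * ((Sᵀ * W * S)⁻¹ * (Sᵀ * W * S)) := by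
        simp only [projMat, Matrix.sub_mul, Matrix.one_mul, Matrix.mul_assoc]
    _ = 0 := by rw [hinv, Matrix.mul_one, sub_self]

lemma one_sub_projMat_mul_mul_of_transpose_mul_mul_eq_zero {n q p : ℕ}
    {S : Matrix (Fin n) (Fin q) ℝ} {W : Matrix (Fin n) (Fin n) ℝ}
    {T : Matrix (Fin n) (Fin p) ℝ} (hT : Sᵀ * W * T = 0) :
    (1 - projMat S W * W) * T = T := by
  calc (1 - projMat S W * W) * T = T - S * (Sᵀ * W * S)⁻¹ * (Sᵀ * W * T) := by
        simp only [projMat, Matrix.sub_mul, Matrix.one_mul, Matrix.mul_assoc]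
    _ = T := by rw [hT, Matrix.mul_zero, sub_zero]

section Update

variable {n q p : ℕ} {S : Matrix (Fin n) (Fin q) ℝ} {W Q G A : Matrix (Fin n) (Fin n) ℝ}

lemma update_mul_self (hM : IsUnit (Sᵀ * W * S)) :
    (Q + A * (G - Q) * (1 - projMat S W * W)) * S = Q * S := by
  rw [Matrix.add_mul, Matrix.mul_assoc, one_sub_projMat_mul_mul_self hM, Matrix.mul_zero, add_zero]

lemma update_mul_of_transpose_mul_mul_eq_zero {T : Matrix (Fin n) (Fin p) ℝ}
    (hT : Sᵀ * W * T = 0) (hG : G * T = Q * T) :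
    (Q + A * (G - Q) * (1 - projMat S W * W)) * T = Q * T := by
  rw [Matrix.add_mul, Matrix.mul_assoc, one_sub_projMat_mul_mul_of_transpose_mul_mul_eq_zero hT,
    Matrix.mul_assoc, Matrix.sub_mul, hG, sub_self, Matrix.mul_zero, add_zero]

end Update

theorem stmt5_general {n : ℕ} (ρ : ℕ)
    (Q : Matrix (Fin n) (Fin n) ℝ) (hQ : Q.IsSymm)
    (q : ℕ → ℕ)
    (W : ℕ → Matrix (Fin n) (Fin n) ℝ)
    (S : (k : ℕ) → Matrix (Fin n) (Fin (q k)) ℝ)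
    (hW : ∀ i ≤ ρ, (W i).PosDef)
    (hSli : ∀ i ≤ ρ, LinearIndependent ℝ (fun j : Fin (q i) => (S i)ᵀ j))
    (haction : ∀ i ≤ ρ, W i * S i = Q * S i)
    (horth : ∀ i k : ℕ, i < k → k ≤ ρ → (S k)ᵀ * Q * S i = 0)
    (G : ℕ → Matrix (Fin n) (Fin n) ℝ)
    (hrec : ∀ k ≤ ρ, G (k + 1) =
      Q + (1 - W k * projMat (S k) (W k)) * (G k - Q) * (1 - projMat (S k) (W k) * W k)) :
    ∀ i k : ℕ, i ≤ k → k ≤ ρ → G (k + 1) * S i = Q * S i := by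
  intro i k hik
  induction k, hik using Nat.le_induction with
  | base =>
    intro hi
    rw [hrec i hi]
    exact update_mul_self (isUnit_transpose_mul_mul_self (hW i hi) (hSli i hi))
  | succ k hik ih =>
    intro hk
    have hWsymm : (W (k + 1)).IsSymm := isHermitian_iff_isSymm.mp (hW _ hk).isHermitian
    have horth' : (S (k + 1))ᵀ * W (k + 1) * S i = 0 := by
      rw [transpose_mul_mul_eq_of_mul_eq hWsymm hQ (haction _ hk)]
      exact horth i (k + 1) (by omega) hk
    rw [hrec _ hk]
    exact update_mul_of_transpose_mul_mul_eq_zero horth' (ih (by omega))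

/-- Quadratic hereditary when the weighting matrices satisfy the action constraint
`Wᵢ·Sᵢ = Q·Sᵢ` and the sampling matrices are mutually `Q`-orthogonal. -/
theorem stmt5 {n : ℕ} (ρ : ℕ) (hρ : 0 < ρ)
    (Q G₀ : Matrix (Fin n) (Fin n) ℝ) (hQ : Q.IsSymm) (hG₀ : G₀.IsSymm)
    (q : ℕ → ℕ)
    (W : ℕ → Matrix (Fin n) (Fin n) ℝ)
    (S : (k : ℕ) → Matrix (Fin n) (Fin (q k)) ℝ)
    (hW : ∀ i ≤ ρ, (W i).PosDef)
    (hSli : ∀ i ≤ ρ, LinearIndependent ℝ (fun j : Fin (q i) => (S i)ᵀ j))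
    (haction : ∀ i ≤ ρ, W i * S i = Q * S i)
    (horth : ∀ i k : ℕ, i < k → k ≤ ρ → (S k)ᵀ * Q * S i = 0)
    (G : ℕ → Matrix (Fin n) (Fin n) ℝ)
    (hG0 : G 0 = G₀)
    (hrec : ∀ k ≤ ρ, G (k + 1) =
      Q + (1 - W k * projMat (S k) (W k)) * (G k - Q) * (1 - projMat (S k) (W k) * W k)) :
    ∀ i k : ℕ, i ≤ k → k ≤ ρ → G (k + 1) * S i = Q * S i :=
  stmt5_general ρ Q hQ q W S hW hSli haction horth G hrec
end

section
/- Let Q ∈ ℝ^{n×n} be symmetric and S ∈ ℝ^{n×q} be such that SᵀQS is positive definite (in particular invertible). Define P := S(SᵀQS)⁻¹Sᵀ·Q and W := Q·P + (I−P)ᵀ(I−P). Then W is symmetric, positive definite, and satisfies the action constraint W·S = Q·S. (Hence a symmetric positive definite weighting matrix whose action on S agrees with that of Q always exists when SᵀQS is positive definite.) -/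
/-!
Write `P := S(SᵀQS)⁻¹SᵀQ`. Then `PS = S`, so `(I - P)S = 0` and `WS = QPS = QS`. The first summand
`QP = (SᵀQ)ᵀ(SᵀQS)⁻¹(SᵀQ)` and the second `(I - P)ᵀ(I - P)` are positive semidefinite, so `W` is
positive definite as soon as their kernels meet trivially: if `(I - P)x = 0` and `QPx = 0`, then
`Qx = QPx = 0`, hence `x = Px = S(SᵀQS)⁻¹Sᵀ(Qx) = 0`.
-/

open Matrix
open scoped ComplexOrder

namespace Matrix

theorem PosSemidef.posDef_add {𝕜 n : Type*} [RCLike 𝕜] [Fintype n] {A B : Matrix n n 𝕜}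
    (hA : A.PosSemidef) (hB : B.PosSemidef) (hker : ∀ x, A *ᵥ x = 0 → B *ᵥ x = 0 → x = 0) :
    (A + B).PosDef := by
  refine .of_dotProduct_mulVec_pos (hA.isHermitian.add hB.isHermitian) fun x hx ↦ ?_
  have hAx := hA.dotProduct_mulVec_nonneg x
  have hBx := hB.dotProduct_mulVec_nonneg x
  rw [add_mulVec, dotProduct_add]
  refine (add_nonneg hAx hBx).lt_of_ne fun hsum ↦ hx ?_
  obtain ⟨hAx0, hBx0⟩ := (add_eq_zero_iff_of_nonneg hAx hBx).1 hsum.symm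
  exact hker x ((hA.dotProduct_mulVec_zero_iff x).1 hAx0) ((hB.dotProduct_mulVec_zero_iff x).1 hBx0)

section WeightedProjection

variable {m k : Type*} [Fintype m] [Fintype k] [DecidableEq k]

noncomputable def weightedProj (Q : Matrix m m ℝ) (S : Matrix m k ℝ) : Matrix m m ℝ :=
  S * (Sᵀ * Q * S)⁻¹ * Sᵀ * Q

variable {Q : Matrix m m ℝ} {S : Matrix m k ℝ}

theorem weightedProj_mul_self (h : IsUnit (Sᵀ * Q * S)) : weightedProj Q S * S = S := by
  calc weightedProj Q S * S = S * ((Sᵀ * Q * S)⁻¹ * (Sᵀ * Q * S)) := by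
        simp only [weightedProj, Matrix.mul_assoc]
    _ = S := by rw [nonsing_inv_mul _ ((isUnit_iff_isUnit_det _).1 h), Matrix.mul_one]

theorem mul_weightedProj (hQ : Q.IsSymm) :
    Q * weightedProj Q S = (Sᵀ * Q)ᵀ * (Sᵀ * Q * S)⁻¹ * (Sᵀ * Q) := by
  simp only [weightedProj, transpose_mul, transpose_transpose, hQ.eq, Matrix.mul_assoc]

theorem posSemidef_mul_weightedProj (hQ : Q.IsSymm) (h : (Sᵀ * Q * S).PosSemidef) :
    (Q * weightedProj Q S).PosSemidef := by
  rw [mul_weightedProj hQ, ← conjTranspose_eq_transpose_of_trivial]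
  exact h.inv.conjTranspose_mul_mul_same _

variable [DecidableEq m]

theorem eq_zero_of_mul_weightedProj_mulVec_eq_zero {x : m → ℝ}
    (hQP : (Q * weightedProj Q S) *ᵥ x = 0) (hP : (1 - weightedProj Q S) *ᵥ x = 0) : x = 0 := by
  have hx : weightedProj Q S *ᵥ x = x := by
    rwa [sub_mulVec, one_mulVec, sub_eq_zero, eq_comm] at hP
  have hQx : Q *ᵥ x = 0 := by rwa [← mulVec_mulVec, hx] at hQP
  rw [← hx, weightedProj, ← mulVec_mulVec, hQx, mulVec_zero]

noncomputable def weightMatrix (Q : Matrix m m ℝ) (S : Matrix m k ℝ) : Matrix m m ℝ :=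
  Q * weightedProj Q S + (1 - weightedProj Q S)ᵀ * (1 - weightedProj Q S)

theorem weightMatrix_posDef (hQ : Q.IsSymm) (h : (Sᵀ * Q * S).PosDef) :
    (weightMatrix Q S).PosDef := by
  have hI : ((1 - weightedProj Q S)ᵀ * (1 - weightedProj Q S)).PosSemidef := by
    rw [← conjTranspose_eq_transpose_of_trivial]
    exact posSemidef_conjTranspose_mul_self _
  refine PosSemidef.posDef_add (posSemidef_mul_weightedProj hQ h.posSemidef) hI
    fun x hQP hP ↦ eq_zero_of_mul_weightedProj_mulVec_eq_zero hQP ?_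
  rwa [← conjTranspose_eq_transpose_of_trivial, conjTranspose_mul_self_mulVec_eq_zero] at hP

theorem weightMatrix_mul (h : IsUnit (Sᵀ * Q * S)) : weightMatrix Q S * S = Q * S := by
  rw [weightMatrix, Matrix.add_mul, Matrix.mul_assoc, Matrix.mul_assoc, weightedProj_mul_self h,
    Matrix.sub_mul, Matrix.one_mul, weightedProj_mul_self h, sub_self, Matrix.mul_zero, add_zero]

end WeightedProjection

end Matrix

/-- If `SᵀQS` is positive definite, then `W := Q·P + (I−P)ᵀ(I−P)` with
`P := S(SᵀQS)⁻¹SᵀQ` is a symmetric positive definite weighting matrix satisfying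
the action constraint `W·S = Q·S`. -/
theorem stmt7 {n q : ℕ} (Q : Matrix (Fin n) (Fin n) ℝ) (hQ : Q.IsSymm)
    (S : Matrix (Fin n) (Fin q) ℝ) (hSQS : (Sᵀ * Q * S).PosDef) :
    ((Q * (S * (Sᵀ * Q * S)⁻¹ * Sᵀ * Q) +
        (1 - S * (Sᵀ * Q * S)⁻¹ * Sᵀ * Q)ᵀ * (1 - S * (Sᵀ * Q * S)⁻¹ * Sᵀ * Q)).IsSymm) ∧
    ((Q * (S * (Sᵀ * Q * S)⁻¹ * Sᵀ * Q) +
        (1 - S * (Sᵀ * Q * S)⁻¹ * Sᵀ * Q)ᵀ * (1 - S * (Sᵀ * Q * S)⁻¹ * Sᵀ * Q)).PosDef) ∧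
    (Q * (S * (Sᵀ * Q * S)⁻¹ * Sᵀ * Q) +
        (1 - S * (Sᵀ * Q * S)⁻¹ * Sᵀ * Q)ᵀ * (1 - S * (Sᵀ * Q * S)⁻¹ * Sᵀ * Q)) * S = Q * S := by
  have hW : (weightMatrix Q S).PosDef := weightMatrix_posDef hQ hSQS
  exact ⟨isHermitian_iff_isSymm.1 hW.isHermitian, hW, weightMatrix_mul hSQS.isUnit⟩
end

section
/- (Restarting Preconditioner.) Let Q ∈ ℝ^{n×n} be symmetric and let p₀,…,p_{k−1} ∈ ℝⁿ. Let M ∈ ℝ^{n×n} be symmetric and invertible with M⁻¹·Q·pⱼ = pⱼ for j = 0,…,k−1, and let r̄₀ ∈ ℝⁿ satisfy pⱼᵀ·r̄₀ = 0 for j = 0,…,k−1. Define sequences (r̄_t) and (p̄_t) by preconditioned conjugate gradient recurrences with arbitrary real coefficients (α_t) and (β_t): p̄₀ := −M⁻¹r̄₀, and for t ≥ 1, r̄_t := r̄_{t−1} + α_{t−1}·Q·p̄_{t−1} and p̄_t := −M⁻¹r̄_t + β_{t−1}·p̄_{t−1}. Then for every t ≥ 0 and every j = 0,…,k−1: r̄_tᵀ·pⱼ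 = 0 and p̄_tᵀ·Q·pⱼ = 0. In particular, if {p₀,…,p_{k−1}} is a Q-orthogonal set, then {p₀,…,p_{k−1}, p̄₀,…,p̄_t} is a Q-orthogonal set for every t. -/
open Matrix

lemma symm_dot13 {n : ℕ} {A : Matrix (Fin n) (Fin n) ℝ} (hA : A.IsSymm)
    (u v : Fin n → ℝ) : u ⬝ᵥ (A *ᵥ v) = (A *ᵥ u) ⬝ᵥ v := by
  rw [dotProduct_mulVec, ← mulVec_transpose, hA.eq]

/-- Restarting Preconditioner: if `M⁻¹Qpⱼ = pⱼ` for the previous conjugate directions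
`p₀,…,p_{k−1}` and the restarting residual `r̄₀` is orthogonal to them, then all PCG
residuals stay orthogonal to the `pⱼ` and all new search directions are `Q`-orthogonal
to the `pⱼ`.  In particular, if the `pⱼ` form a `Q`-orthogonal set, then the `pⱼ`
together with the new directions `p̄₀,…,p̄_t` form a `Q`-orthogonal set. -/
theorem stmt13 {n k : ℕ} (Q M : Matrix (Fin n) (Fin n) ℝ)
    (hQ : Q.IsSymm) (hM : M.IsSymm) (hMinv : IsUnit M)
    (p : Fin k → (Fin n → ℝ))
    (hMp : ∀ j : Fin k, M⁻¹ *ᵥ (Q *ᵥ p j) = p j)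
    (rb : ℕ → (Fin n → ℝ)) (pb : ℕ → (Fin n → ℝ))
    (hr0 : ∀ j : Fin k, p j ⬝ᵥ rb 0 = 0)
    (α β : ℕ → ℝ)
    (hp0 : pb 0 = -(M⁻¹ *ᵥ rb 0))
    (hrrec : ∀ t : ℕ, rb (t + 1) = rb t + α t • (Q *ᵥ pb t))
    (hprec : ∀ t : ℕ, pb (t + 1) = -(M⁻¹ *ᵥ rb (t + 1)) + β t • pb t) :
    (∀ t : ℕ, ∀ j : Fin k, rb t ⬝ᵥ p j = 0 ∧ pb t ⬝ᵥ (Q *ᵥ p j) = 0) ∧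
    ((∀ i j : Fin k, i ≠ j → p i ⬝ᵥ (Q *ᵥ p j) = 0) →
      ∀ t : ℕ, ∀ j : Fin k, pb t ⬝ᵥ (Q *ᵥ p j) = 0 ∧ p j ⬝ᵥ (Q *ᵥ pb t) = 0) := by
  have hMi : (M⁻¹).IsSymm := by
    rw [Matrix.IsSymm, Matrix.transpose_nonsing_inv, hM.eq]
  -- key: (M⁻¹ *ᵥ r) ⬝ᵥ (Q *ᵥ p j) = r ⬝ᵥ p j
  have key : ∀ (r : Fin n → ℝ) (j : Fin k),
      (M⁻¹ *ᵥ r) ⬝ᵥ (Q *ᵥ p j) = r ⬝ᵥ p j := by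
    intro r j
    rw [← symm_dot13 hMi r (Q *ᵥ p j), hMp j]
  have main : ∀ t : ℕ, ∀ j : Fin k, rb t ⬝ᵥ p j = 0 ∧ pb t ⬝ᵥ (Q *ᵥ p j) = 0 := by
    intro t
    induction t with
    | zero =>
      intro j
      have h1 : rb 0 ⬝ᵥ p j = 0 := by rw [dotProduct_comm]; exact hr0 j
      refine ⟨h1, ?_⟩
      rw [hp0, neg_dotProduct, key, h1, neg_zero]
    | succ t ih =>
      intro j
      obtain ⟨h1, h2⟩ := ih j
      have hr : rb (t + 1) ⬝ᵥ p j = 0 := by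
        rw [hrrec t, add_dotProduct, smul_dotProduct, h1,
          ← symm_dot13 hQ, h2, zero_add, smul_zero]
      refine ⟨hr, ?_⟩
      rw [hprec t, add_dotProduct, neg_dotProduct, key, hr,
        smul_dotProduct, h2, neg_zero, zero_add, smul_zero]
  refine ⟨main, fun _ t j => ⟨(main t j).2, ?_⟩⟩
  rw [symm_dot13 hQ, dotProduct_comm]
  exact (main t j).2
end
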